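/- Every m × m unitary matrix U can be written as a product U = D · T_1 ⋯ T_r with r ≤ m(m−1)/2, where D is a diagonal unitary matrix and each factor T_s is a Mach–Zehnder interferometer matrix: a matrix equal to the identity except on two adjacent modes j, j+1 (for some 1 ≤ j ≤ m−1), where its 2×2 block is [[e^{iθ} cos(θ'/2), −sin(θ'/2)], [e^{iθ} sin(θ'/2), cos(θ'/2)]] for some real angles θ, θ'. -/

import Mathlib

open Complex

/-- The `m × m` Mach–Zehnder interferometer matrix acting on the adjacent modes `j, j+1`
(zero-based indexing) with angles `θ, θ'`: it agrees with the identity outside rows and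
columns `j, j+1`, and its `2 × 2` block on these modes is
`[[e^{iθ} cos(θ'/2), -sin(θ'/2)], [e^{iθ} sin(θ'/2), cos(θ'/2)]]`. -/
noncomputable def mziMatrix (m j : ℕ) (θ θ' : ℝ) : Matrix (Fin m) (Fin m) ℂ :=
  fun a b =>
    if (a : ℕ) = j then
      if (b : ℕ) = j then Complex.exp (θ * Complex.I) * Real.cos (θ' / 2)
      else if (b : ℕ) = j + 1 then -(Real.sin (θ' / 2) : ℂ)
      else 0
    else if (a : ℕ) = j + 1 then
      if (b : ℕ) = j then Complex.exp (θ * Complex.I) * Real.sin (θ' / 2)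
      else if (b : ℕ) = j + 1 then (Real.cos (θ' / 2) : ℂ)
      else 0
    else if a = b then 1 else 0

open Matrix

/-!
Reck's elimination. Right-multiplying `W` by `star T`, for an interferometer `T` on the modes
`k, k+1`, replaces the columns `k, k+1` of `W` by combinations of them, and the two angles can
be chosen to annihilate the entry in column `k` of any prescribed row. If the rows and columns
beyond `n` are already diagonal, sweeping `k = 0, …, n-1` clears row `n` left of the diagonal
at the cost of `n` interferometers; as the rows of a unitary matrix are orthonormal, column `n`
is then cleared as well. Doing this for `n = m-1, …, 0` leaves a diagonal unitary matrix after
`∑_{n<m} n = m(m-1)/2` interferometers.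
-/

theorem Matrix.mul_star_apply {l n α : Type*} [Fintype n] [Mul α] [AddCommMonoid α] [Star α]
    (W : Matrix l n α) (A : Matrix n n α) (a : l) (b : n) :
    (W * star A) a b = W a ⬝ᵥ star (A b) :=
  rfl

theorem Matrix.apply_eq_zero_of_row_eq_zero_of_mem_unitaryGroup {n α : Type*} [Fintype n]
    [DecidableEq n] [CommRing α] [StarRing α] {V : Matrix n n α} (hV : V ∈ unitaryGroup n α)
    {i : n} (hrow : ∀ b, b ≠ i → V i b = 0) {a : n} (ha : a ≠ i) : V a i = 0 := by
  have hVi : V i = Pi.single i (V i i) := by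
    ext b
    rcases eq_or_ne b i with rfl | hb
    · simp
    · simp [hrow b hb, hb]
  have hVV := mem_unitaryGroup_iff.mp hV
  have hii : V i i * star (V i i) = 1 := by
    have h := congrFun (congrFun hVV i) i
    rwa [mul_star_apply, hVi, Pi.star_single, dotProduct_single, Pi.single_eq_same,
      one_apply_eq] at h
  have hai : V a i * star (V i i) = 0 := by
    have h := congrFun (congrFun hVV a) i
    rwa [mul_star_apply, hVi, Pi.star_single, dotProduct_single, one_apply_ne ha] at h
  calc V a i = V i i * (V a i * star (V i i)) := by linear_combination (-V a i) * hii
    _ = 0 := by rw [hai, mul_zero]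

theorem Real.exists_mul_cos_eq_mul_sin (x y : ℝ) : ∃ φ, x * Real.cos φ = y * Real.sin φ := by
  by_cases h : (y + x * I : ℂ) = 0
  · have hx : x = 0 := by simpa using congrArg Complex.im h
    exact ⟨0, by simp [hx]⟩
  · refine ⟨arg (y + x * I), ?_⟩
    rw [Complex.cos_arg h, Complex.sin_arg]
    simp only [Complex.add_re, Complex.ofReal_re, Complex.mul_re, Complex.I_re,
      Complex.ofReal_im, Complex.I_im, Complex.add_im, Complex.mul_im]
    ring

theorem Complex.exists_mul_conj_exp_mul_cos_eq_mul_sin (u v : ℂ) :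
    ∃ θ φ : ℝ, u * starRingEnd ℂ (exp (θ * I)) * Real.cos φ = v * Real.sin φ := by
  obtain ⟨φ, hφ⟩ := Real.exists_mul_cos_eq_mul_sin ‖u‖ ‖v‖
  refine ⟨arg u - arg v, φ, ?_⟩
  have hphase : u * starRingEnd ℂ (exp (↑(arg u - arg v) * I)) = ‖u‖ * exp (arg v * I) := by
    nth_rewrite 1 [← norm_mul_exp_arg_mul_I u]
    rw [← exp_conj, map_mul, conj_ofReal, conj_I, mul_assoc, ← exp_add]
    congr 2
    push_cast
    ring
  calc u * starRingEnd ℂ (exp (↑(arg u - arg v) * I)) * Real.cos φ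
      = ((‖u‖ * Real.cos φ : ℝ) : ℂ) * exp (arg v * I) := by rw [hphase]; push_cast; ring
    _ = ‖v‖ * exp (arg v * I) * Real.sin φ := by rw [hφ]; push_cast; ring
    _ = v * Real.sin φ := by rw [norm_mul_exp_arg_mul_I]

section
variable {m : ℕ} {i i' : Fin m} (hii' : (i' : ℕ) = i + 1) (θ θ' : ℝ)
  (W : Matrix (Fin m) (Fin m) ℂ)
include hii'

theorem mziMatrix_row_fst :
    mziMatrix m i θ θ' i =
      Pi.single i (exp (θ * I) * Real.cos (θ' / 2)) +
        Pi.single i' (-(Real.sin (θ' / 2) : ℂ)) := by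
  ext b
  simp only [mziMatrix, Pi.add_apply, Pi.single_apply, Fin.ext_iff, hii']
  split_ifs <;> first | omega | simp

theorem mziMatrix_row_snd :
    mziMatrix m i θ θ' i' =
      Pi.single i (exp (θ * I) * Real.sin (θ' / 2)) +
        Pi.single i' (Real.cos (θ' / 2) : ℂ) := by
  ext b
  simp only [mziMatrix, Pi.add_apply, Pi.single_apply, Fin.ext_iff, hii']
  split_ifs <;> first | omega | simp

theorem mziMatrix_row_of_ne {a : Fin m} (hai : a ≠ i) (hai' : a ≠ i') :
    mziMatrix m i θ θ' a = Pi.single a 1 := by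
  rw [Ne, Fin.ext_iff] at hai hai'
  ext b
  simp only [mziMatrix, Pi.single_apply, Fin.ext_iff, eq_comm (a := b)]
  split_ifs <;> first | omega | rfl

theorem mziMatrix_mem_unitaryGroup : mziMatrix m i θ θ' ∈ unitaryGroup (Fin m) ℂ := by
  have hne : i' ≠ i := by simp [Fin.ext_iff, hii']
  have hphase : exp (θ * I) * starRingEnd ℂ (exp (θ * I)) = 1 := by
    rw [Complex.mul_conj', Complex.norm_exp_ofReal_mul_I]; simp
  have hpyth : (Real.cos (θ' / 2) : ℂ) ^ 2 + (Real.sin (θ' / 2) : ℂ) ^ 2 = 1 := by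
    exact_mod_cast Real.cos_sq_add_sin_sq (θ' / 2)
  have trichotomy (c : Fin m) : c = i ∨ c = i' ∨ (c ≠ i ∧ c ≠ i') := by tauto
  rw [mem_unitaryGroup_iff]
  ext a b
  rcases trichotomy a with ha | ha | ⟨hai, hai'⟩ <;>
    rcases trichotomy b with hb | hb | ⟨hbi, hbi'⟩ <;> clear trichotomy <;>
    simp [mul_star_apply, mziMatrix_row_fst hii', mziMatrix_row_snd hii',
      mziMatrix_row_of_ne hii', *, dotProduct_add, Pi.star_single, Pi.single_apply, one_apply,
      Complex.conj_ofReal, -Complex.ofReal_cos, -Complex.ofReal_sin]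
  all_goals grind

theorem mul_star_mziMatrix_apply_fst (a : Fin m) :
    (W * star (mziMatrix m i θ θ')) a i =
      W a i * starRingEnd ℂ (exp (θ * I)) * Real.cos (θ' / 2) -
        W a i' * Real.sin (θ' / 2) := by
  simp [mul_star_apply, mziMatrix_row_fst hii', dotProduct_add, Pi.star_single,
    Complex.conj_ofReal, -Complex.ofReal_cos, -Complex.ofReal_sin]
  ring

theorem mul_star_mziMatrix_apply_of_ne (a : Fin m) {b : Fin m} (hbi : b ≠ i) (hbi' : b ≠ i') :
    (W * star (mziMatrix m i θ θ')) a b = W a b := by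
  simp [mul_star_apply, mziMatrix_row_of_ne hii' θ θ' hbi hbi', Pi.star_single]

theorem mul_star_mziMatrix_apply_of_apply_eq_zero {a : Fin m} (hi : W a i = 0)
    (hi' : W a i' = 0) (b : Fin m) : (W * star (mziMatrix m i θ θ')) a b = W a b := by
  by_cases hbi : b = i
  · subst hbi
    simp [mul_star_mziMatrix_apply_fst hii', hi, hi']
  by_cases hbi' : b = i'
  · subst hbi'
    simp [mul_star_apply, mziMatrix_row_snd hii', dotProduct_add, Pi.star_single, hi, hi']
  exact mul_star_mziMatrix_apply_of_ne hii' θ θ' W a hbi hbi'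

theorem exists_mul_star_mziMatrix_apply_eq_zero (a : Fin m) :
    ∃ θ θ' : ℝ, (W * star (mziMatrix m i θ θ')) a i = 0 := by
  obtain ⟨θ, φ, h⟩ := Complex.exists_mul_conj_exp_mul_cos_eq_mul_sin (W a i) (W a i')
  refine ⟨θ, 2 * φ, ?_⟩
  rw [mul_star_mziMatrix_apply_fst hii', mul_div_cancel_left₀ φ two_ne_zero, h, sub_self]

end

/-- `W = diag(W₀, dₙ, …, d_{m-1})` with a block `W₀` of size `n`. -/
def IsDiagBeyond {α : Type*} [Zero α] {m : ℕ} (n : ℕ) (W : Matrix (Fin m) (Fin m) α) :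
    Prop :=
  ∀ a b : Fin m, a ≠ b → n ≤ a ∨ n ≤ b → W a b = 0

namespace IsDiagBeyond
variable {α : Type*} {m : ℕ}

theorem of_dim [Zero α] (W : Matrix (Fin m) (Fin m) α) : IsDiagBeyond m W :=
  fun a _ _ h => absurd h (by omega)

theorem isDiag [Zero α] {W : Matrix (Fin m) (Fin m) α} (hW : IsDiagBeyond 0 W) : W.IsDiag :=
  fun a b hab => hW a b hab (.inl (Nat.zero_le a))

theorem of_succ [CommRing α] [StarRing α] {V : Matrix (Fin m) (Fin m) α}
    (hV : V ∈ unitaryGroup (Fin m) α) {n : Fin m} (hVn : IsDiagBeyond (n + 1) V)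
    (hrow : ∀ b : Fin m, b < n → V n b = 0) : IsDiagBeyond n V := by
  have hrow' (b : Fin m) (hb : b ≠ n) : V n b = 0 :=
    hb.lt_or_gt.elim (hrow b) fun h => hVn n b hb.symm (.inr h)
  intro a b hab hle
  rcases eq_or_ne a n with rfl | han
  · exact hrow' b hab.symm
  rcases eq_or_ne b n with rfl | hbn
  · exact apply_eq_zero_of_row_eq_zero_of_mem_unitaryGroup hV hrow' han
  · refine hVn a b hab ?_
    rw [Ne, Fin.ext_iff] at han hbn
    omega

theorem mul_star_mziMatrix {V : Matrix (Fin m) (Fin m) ℂ} {n : ℕ} (hV : IsDiagBeyond n V)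
    {i i' : Fin m} (hii' : (i' : ℕ) = i + 1) (hi' : (i' : ℕ) < n) (θ θ' : ℝ) :
    IsDiagBeyond n (V * star (mziMatrix m i θ θ')) := by
  intro a b hab hle
  by_cases ha : n ≤ a
  · have hai : a ≠ i := by rw [Ne, Fin.ext_iff]; omega
    have hai' : a ≠ i' := by rw [Ne, Fin.ext_iff]; omega
    rw [mul_star_mziMatrix_apply_of_apply_eq_zero hii' θ θ' V (hV a i hai (.inl ha))
      (hV a i' hai' (.inl ha)), hV a b hab hle]
  · have hbi : b ≠ i := by rw [Ne, Fin.ext_iff]; omega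
    have hbi' : b ≠ i' := by rw [Ne, Fin.ext_iff]; omega
    rw [mul_star_mziMatrix_apply_of_ne hii' θ θ' V a hbi hbi', hV a b hab hle]

end IsDiagBeyond

def IsMZI (m : ℕ) (A : Matrix (Fin m) (Fin m) ℂ) : Prop :=
  ∃ (j : ℕ) (θ θ' : ℝ), j + 1 < m ∧ A = mziMatrix m j θ θ'

def EqMulProdMZI {m : ℕ} (r : ℕ) (W V : Matrix (Fin m) (Fin m) ℂ) : Prop :=
  ∃ L : List (Matrix (Fin m) (Fin m) ℂ),
    L.length = r ∧ (∀ A ∈ L, IsMZI m A) ∧ W = V * L.prod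

namespace EqMulProdMZI
variable {m : ℕ}

theorem refl (W : Matrix (Fin m) (Fin m) ℂ) : EqMulProdMZI 0 W W :=
  ⟨[], rfl, by simp, by simp⟩

theorem trans {r s : ℕ} {W V V' : Matrix (Fin m) (Fin m) ℂ} (h : EqMulProdMZI r W V)
    (h' : EqMulProdMZI s V V') : EqMulProdMZI (r + s) W V' := by
  obtain ⟨L, hlen, hL, rfl⟩ := h
  obtain ⟨L', hlen', hL', rfl⟩ := h'
  refine ⟨L' ++ L, by simp [hlen, hlen', add_comm], ?_, by rw [List.prod_append, mul_assoc]⟩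
  simpa [or_imp, forall_and] using And.intro hL' hL

theorem mul_star_mziMatrix (W : Matrix (Fin m) (Fin m) ℂ) {i i' : Fin m}
    (hii' : (i' : ℕ) = i + 1) (θ θ' : ℝ) :
    EqMulProdMZI 1 W (W * star (mziMatrix m i θ θ')) := by
  refine ⟨[mziMatrix m i θ θ'], rfl, ?_, ?_⟩
  · simpa using ⟨i, θ, θ', hii' ▸ i'.isLt, rfl⟩
  · rw [List.prod_singleton, mul_assoc,
      mem_unitaryGroup_iff'.mp (mziMatrix_mem_unitaryGroup hii' θ θ'), mul_one]

end EqMulProdMZI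

theorem exists_eqMulProdMZI_row_eq_zero {m : ℕ} {n : Fin m} {W : Matrix (Fin m) (Fin m) ℂ}
    (hW : W ∈ unitaryGroup (Fin m) ℂ) (hWn : IsDiagBeyond (n + 1) W) {k : ℕ} (hk : k ≤ n) :
    ∃ V, EqMulProdMZI k W V ∧ V ∈ unitaryGroup (Fin m) ℂ ∧ IsDiagBeyond (n + 1) V ∧
      ∀ b : Fin m, (b : ℕ) < k → V n b = 0 := by
  induction k with
  | zero => exact ⟨W, .refl W, hW, hWn, fun b hb => absurd hb (Nat.not_lt_zero _)⟩
  | succ k ih =>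
    obtain ⟨V, hWV, hV, hVn, hrow⟩ := ih (by omega)
    let i : Fin m := ⟨k, by omega⟩
    let i' : Fin m := ⟨k + 1, by omega⟩
    have hii' : (i' : ℕ) = i + 1 := rfl
    obtain ⟨θ, θ', hzero⟩ := exists_mul_star_mziMatrix_apply_eq_zero hii' V n
    refine ⟨V * star (mziMatrix m i θ θ'), hWV.trans (.mul_star_mziMatrix V hii' θ θ'),
      mul_mem hV (Unitary.star_mem (mziMatrix_mem_unitaryGroup hii' θ θ')),
      hVn.mul_star_mziMatrix hii' (by simp [i']; omega) θ θ', fun b hb => ?_⟩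
    rcases eq_or_ne b i with rfl | hbi
    · exact hzero
    · have hbk : (b : ℕ) < k := lt_of_le_of_ne (Nat.lt_succ_iff.mp hb) (Fin.val_ne_of_ne hbi)
      have hbi' : b ≠ i' := Fin.ne_of_val_ne (show (b : ℕ) ≠ k + 1 by omega)
      rw [mul_star_mziMatrix_apply_of_ne hii' θ θ' V n hbi hbi']
      exact hrow b hbk

theorem exists_eqMulProdMZI_isDiag {m n : ℕ} (hn : n ≤ m) {U : Matrix (Fin m) (Fin m) ℂ}
    (hU : U ∈ unitaryGroup (Fin m) ℂ) (hUn : IsDiagBeyond n U) :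
    ∃ D, EqMulProdMZI (∑ k ∈ Finset.range n, k) U D ∧ D.IsDiag ∧
      D ∈ unitaryGroup (Fin m) ℂ := by
  induction n generalizing U with
  | zero => exact ⟨U, .refl U, hUn.isDiag, hU⟩
  | succ n ih =>
    obtain ⟨V, hUV, hV, hVn, hrow⟩ :=
      exists_eqMulProdMZI_row_eq_zero (n := ⟨n, hn⟩) hU hUn le_rfl
    obtain ⟨D, hVD, hD, hDu⟩ := ih (by omega) hV (hVn.of_succ hV hrow)
    refine ⟨D, ?_, hD, hDu⟩
    rw [Finset.sum_range_succ, add_comm]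
    exact hUV.trans hVD

theorem unitary_eq_diagonal_mul_prod_mzi_general (m : ℕ)
    (U : Matrix (Fin m) (Fin m) ℂ) (hU : U ∈ Matrix.unitaryGroup (Fin m) ℂ) :
    ∃ (r : ℕ) (_ : r ≤ m * (m - 1) / 2)
      (D : Matrix (Fin m) (Fin m) ℂ) (T : Fin r → Matrix (Fin m) (Fin m) ℂ),
        D.IsDiag ∧ D ∈ Matrix.unitaryGroup (Fin m) ℂ ∧
        (∀ s, ∃ (j : ℕ) (θ θ' : ℝ), j + 1 < m ∧ T s = mziMatrix m j θ θ') ∧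
        U = D * (List.ofFn T).prod := by
  obtain ⟨D, ⟨L, hlen, hL, rfl⟩, hD, hDu⟩ :=
    exists_eqMulProdMZI_isDiag le_rfl hU (IsDiagBeyond.of_dim U)
  refine ⟨L.length, by rw [hlen, Finset.sum_range_id], D, L.get, hD, hDu,
    fun s => hL _ (L.get_mem s), by rw [List.ofFn_get]⟩

/-- Every `m × m` unitary matrix `U` can be written as `U = D * T_1 ⋯ T_r` with
`r ≤ m(m-1)/2`, where `D` is a diagonal unitary matrix and each `T_s` is a Mach–Zehnder
interferometer matrix acting on some adjacent pair of modes `j, j+1 < m` with some real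
angles `θ, θ'`. -/
theorem unitary_eq_diagonal_mul_prod_mzi (m : ℕ) (hm : 0 < m)
    (U : Matrix (Fin m) (Fin m) ℂ) (hU : U ∈ Matrix.unitaryGroup (Fin m) ℂ) :
    ∃ (r : ℕ) (_ : r ≤ m * (m - 1) / 2)
      (D : Matrix (Fin m) (Fin m) ℂ) (T : Fin r → Matrix (Fin m) (Fin m) ℂ),
        D.IsDiag ∧ D ∈ Matrix.unitaryGroup (Fin m) ℂ ∧
        (∀ s, ∃ (j : ℕ) (θ θ' : ℝ), j + 1 < m ∧ T s = mziMatrix m j θ θ') ∧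
        U = D * (List.ofFn T).prod :=
  unitary_eq_diagonal_mul_prod_mzi_general m U hU
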